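/- arXiv:2401.00898 — 7 statements merged into one kernel-verified Lean document; each statement's English description precedes it below -/
import Mathlib

section
/- If v₁, v₂, v₃, v₄ are traceless 2×2 matrices and rᵢⱼ = −tr(vᵢvⱼ), rᵢⱼₖ = −tr(vᵢvⱼvₖ), then r₁₂₃·v₄ − r₁₃·v₂v₄ + r₁₂·v₃v₄ = r₂₃₄·v₁ + r₃₄·v₁v₂ − r₂₄·v₁v₃. -/
open Matrix

theorem stmt_4 (v₁ v₂ v₃ v₄ : Matrix (Fin 2) (Fin 2) ℂ)
    (h₁ : trace v₁ = 0) (h₂ : trace v₂ = 0) (h₃ : trace v₃ = 0) (h₄ : trace v₄ = 0) :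
    (-trace (v₁ * v₂ * v₃)) • v₄ - (-trace (v₁ * v₃)) • (v₂ * v₄) + (-trace (v₁ * v₂)) • (v₃ * v₄) =
      (-trace (v₂ * v₃ * v₄)) • v₁ + (-trace (v₃ * v₄)) • (v₁ * v₂) - (-trace (v₂ * v₄)) • (v₁ * v₃) := by
  rw [Matrix.trace_fin_two] at h₁ h₂ h₃ h₄
  have e₁ : v₁ 1 1 = - v₁ 0 0 := by linear_combination h₁
  have e₂ : v₂ 1 1 = - v₂ 0 0 := by linear_combination h₂
  have e₃ : v₃ 1 1 = - v₃ 0 0 := by linear_combination h₃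
  have e₄ : v₄ 1 1 = - v₄ 0 0 := by linear_combination h₄
  ext i j
  fin_cases i <;> fin_cases j <;>
    simp [Matrix.trace_fin_two, Matrix.mul_apply, Fin.sum_univ_two, e₁, e₂, e₃, e₄] <;> ring
end

section
/- If v₁, v₂, v₃, v₄ are traceless 2×2 matrices and rᵢⱼ = −tr(vᵢvⱼ), r₁₂₃₄ = −tr(v₁v₂v₃v₄), then 2·r₁₂₃₄ = r₁₃·r₂₄ − r₁₂·r₃₄ − r₁₄·r₂₃. -/
open Matrix

theorem stmt_5 (v₁ v₂ v₃ v₄ : Matrix (Fin 2) (Fin 2) ℂ)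
    (h₁ : trace v₁ = 0) (h₂ : trace v₂ = 0) (h₃ : trace v₃ = 0) (h₄ : trace v₄ = 0) :
    2 * (-trace (v₁ * v₂ * v₃ * v₄)) =
      (-trace (v₁ * v₃)) * (-trace (v₂ * v₄)) - (-trace (v₁ * v₂)) * (-trace (v₃ * v₄))
        - (-trace (v₁ * v₄)) * (-trace (v₂ * v₃)) := by
  simp only [Matrix.trace_fin_two, Matrix.mul_apply, Fin.sum_univ_two] at *
  have e₁ : v₁ 1 1 = -v₁ 0 0 := by linear_combination h₁
  have e₂ : v₂ 1 1 = -v₂ 0 0 := by linear_combination h₂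
  have e₃ : v₃ 1 1 = -v₃ 0 0 := by linear_combination h₃
  have e₄ : v₄ 1 1 = -v₄ 0 0 := by linear_combination h₄
  rw [e₁, e₂, e₃, e₄]
  ring
end

section
/- If v₁,...,v₅ are traceless 2×2 matrices and r with a subscript string denotes minus the trace of the corresponding ordered product, then r₄₅·r₁₂₃ − r₁₃·r₂₄₅ + r₁₂·r₃₄₅ = r₁₅·r₂₃₄ + r₃₄·r₁₂₅ − r₂₄·r₁₃₅. -/
open Matrix

theorem stmt_6 (v₁ v₂ v₃ v₄ v₅ : Matrix (Fin 2) (Fin 2) ℂ)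
    (h₁ : trace v₁ = 0) (h₂ : trace v₂ = 0) (h₃ : trace v₃ = 0) (h₄ : trace v₄ = 0)
    (h₅ : trace v₅ = 0) :
    (-trace (v₄ * v₅)) * (-trace (v₁ * v₂ * v₃)) - (-trace (v₁ * v₃)) * (-trace (v₂ * v₄ * v₅))
      + (-trace (v₁ * v₂)) * (-trace (v₃ * v₄ * v₅)) =
    (-trace (v₁ * v₅)) * (-trace (v₂ * v₃ * v₄)) + (-trace (v₃ * v₄)) * (-trace (v₁ * v₂ * v₅))
      - (-trace (v₂ * v₄)) * (-trace (v₁ * v₃ * v₅)) := by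
  simp only [Matrix.trace_fin_two, Matrix.mul_apply, Fin.sum_univ_two] at *
  have e₁ : v₁ 1 1 = -v₁ 0 0 := by linear_combination h₁
  have e₂ : v₂ 1 1 = -v₂ 0 0 := by linear_combination h₂
  have e₃ : v₃ 1 1 = -v₃ 0 0 := by linear_combination h₃
  have e₄ : v₄ 1 1 = -v₄ 0 0 := by linear_combination h₄
  have e₅ : v₅ 1 1 = -v₅ 0 0 := by linear_combination h₅
  rw [e₁, e₂, e₃, e₄, e₅]
  ring
end

section
/- If v₁,...,v₆ are traceless 2×2 matrices and r with a subscript string denotes minus the trace of the corresponding ordered product, then 2(r₁₅₆·r₂₃₄ − r₁₂₃·r₄₅₆) = r₁₆(r₂₅r₃₄ − r₂₄r₃₅) + r₂₆(r₁₃r₄₅ − r₁₅r₃₄) + r₃₆(r₁₅r₂₄ − r₁₂r₄₅) + r₄₆(r₁₂r₃₅ − r₁₃r₂₅). -/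
open Matrix

theorem stmt_7 (v₁ v₂ v₃ v₄ v₅ v₆ : Matrix (Fin 2) (Fin 2) ℂ)
    (h₁ : trace v₁ = 0) (h₂ : trace v₂ = 0) (h₃ : trace v₃ = 0) (h₄ : trace v₄ = 0)
    (h₅ : trace v₅ = 0) (h₆ : trace v₆ = 0) :
    2 * ((-trace (v₁ * v₅ * v₆)) * (-trace (v₂ * v₃ * v₄))
        - (-trace (v₁ * v₂ * v₃)) * (-trace (v₄ * v₅ * v₆))) =
      (-trace (v₁ * v₆)) * ((-trace (v₂ * v₅)) * (-trace (v₃ * v₄)) - (-trace (v₂ * v₄)) * (-trace (v₃ * v₅)))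
      + (-trace (v₂ * v₆)) * ((-trace (v₁ * v₃)) * (-trace (v₄ * v₅)) - (-trace (v₁ * v₅)) * (-trace (v₃ * v₄)))
      + (-trace (v₃ * v₆)) * ((-trace (v₁ * v₅)) * (-trace (v₂ * v₄)) - (-trace (v₁ * v₂)) * (-trace (v₄ * v₅)))
      + (-trace (v₄ * v₆)) * ((-trace (v₁ * v₂)) * (-trace (v₃ * v₅)) - (-trace (v₁ * v₃)) * (-trace (v₂ * v₅))) := by
  simp only [Matrix.trace, Matrix.diag, Fin.sum_univ_two, Matrix.mul_apply] at *
  have e₁ : v₁ 1 1 = -v₁ 0 0 := by linear_combination h₁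
  have e₂ : v₂ 1 1 = -v₂ 0 0 := by linear_combination h₂
  have e₃ : v₃ 1 1 = -v₃ 0 0 := by linear_combination h₃
  have e₄ : v₄ 1 1 = -v₄ 0 0 := by linear_combination h₄
  have e₅ : v₅ 1 1 = -v₅ 0 0 := by linear_combination h₅
  have e₆ : v₆ 1 1 = -v₆ 0 0 := by linear_combination h₆
  rw [e₁, e₂, e₃, e₄, e₅, e₆]
  ring
end

section
/- (Type II relation.) Let x₁, x₂, x₃, x₄, x_c ∈ SL(2,ℂ), let x̌ = x − (1/2)tr(x)·1, and for indices i₁,...,iᵣ set s_{i₁⋯iᵣ} = −tr(x̌_{i₁}⋯x̌_{iᵣ}). Then s_{1c}·s_{234} − s_{2c}·s_{134} + s_{3c}·s_{124} − s_{4c}·s_{123} = 0. -/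
open Matrix

/-- The traceless part of a 2×2 complex matrix. -/
noncomputable def tracelessPart (x : Matrix (Fin 2) (Fin 2) ℂ) : Matrix (Fin 2) (Fin 2) ℂ :=
  x - ((1 / 2 : ℂ) * trace x) • (1 : Matrix (Fin 2) (Fin 2) ℂ)

theorem stmt_11 (x₁ x₂ x₃ x₄ xc : Matrix (Fin 2) (Fin 2) ℂ)
    (h₁ : x₁.det = 1) (h₂ : x₂.det = 1) (h₃ : x₃.det = 1) (h₄ : x₄.det = 1) (hc : xc.det = 1) :
    (-trace (tracelessPart x₁ * tracelessPart xc)) *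
        (-trace (tracelessPart x₂ * tracelessPart x₃ * tracelessPart x₄))
      - (-trace (tracelessPart x₂ * tracelessPart xc)) *
        (-trace (tracelessPart x₁ * tracelessPart x₃ * tracelessPart x₄))
      + (-trace (tracelessPart x₃ * tracelessPart xc)) *
        (-trace (tracelessPart x₁ * tracelessPart x₂ * tracelessPart x₄))
      - (-trace (tracelessPart x₄ * tracelessPart xc)) *
        (-trace (tracelessPart x₁ * tracelessPart x₂ * tracelessPart x₃)) = 0 := by
  simp only [tracelessPart, trace_fin_two, Matrix.sub_apply, Matrix.smul_apply, one_apply, mul_apply,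
    Fin.sum_univ_two, smul_eq_mul]
  norm_num
  ring
end

section
/- (Type I relation.) Let a₁, a₂, a₃, b₁, b₂, b₃ ∈ SL(2,ℂ), write ǎ = a − (1/2)tr(a)·1 for the traceless part, and set s_{uv} = −tr(ǔ·v̌), s_{uvw} = −tr(ǔ·v̌·w̌). Then 2·s_{a₁a₂a₃}·s_{b₁b₂b₃} equals the determinant of the 3×3 matrix whose (i,j) entry is s_{aᵢbⱼ}. -/
open Matrix

theorem stmt_12 (a b : Fin 3 → Matrix (Fin 2) (Fin 2) ℂ)
    (ha : ∀ i, (a i).det = 1) (hb : ∀ j, (b j).det = 1) :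
    2 * (-trace (tracelessPart (a 0) * tracelessPart (a 1) * tracelessPart (a 2))) *
        (-trace (tracelessPart (b 0) * tracelessPart (b 1) * tracelessPart (b 2))) =
      Matrix.det (Matrix.of fun i j => -trace (tracelessPart (a i) * tracelessPart (b j))) := by
  simp only [tracelessPart, Matrix.det_fin_three, Matrix.of_apply, Matrix.trace_fin_two,
    Matrix.mul_apply, Fin.sum_univ_two, Matrix.sub_apply, Matrix.smul_apply, Matrix.one_apply,
    smul_eq_mul]
  norm_num
  ring
end

section
/- For traceless 2×2 matrices v₁,...,v₆ over ℂ with rᵢⱼ = −tr(vᵢvⱼ), r_{ijk} = −tr(vᵢvⱼvₖ), the identity obtained by switching indices 1 and 2 in the six-matrix trace identity holds: 2(r₂₅₆r₁₃₄ + r₁₂₃r₄₅₆) = r₂₆(r₁₅r₃₄ − r₁₄r₃₅) + r₁₆(r₂₃r₄₅ − r₂₅r₃₄) + r₃₆(r₂₅r₁₄ − r₁₂r₄₅) + r₄₆(r₁₂r₃₅ − r₂₃r₁₅). -/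
open Matrix

theorem stmt_18 (v₁ v₂ v₃ v₄ v₅ v₆ : Matrix (Fin 2) (Fin 2) ℂ)
    (h₁ : trace v₁ = 0) (h₂ : trace v₂ = 0) (h₃ : trace v₃ = 0) (h₄ : trace v₄ = 0)
    (h₅ : trace v₅ = 0) (h₆ : trace v₆ = 0) :
    2 * ((-trace (v₂ * v₅ * v₆)) * (-trace (v₁ * v₃ * v₄))
        + (-trace (v₁ * v₂ * v₃)) * (-trace (v₄ * v₅ * v₆))) =
      (-trace (v₂ * v₆)) * ((-trace (v₁ * v₅)) * (-trace (v₃ * v₄)) - (-trace (v₁ * v₄)) * (-trace (v₃ * v₅)))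
      + (-trace (v₁ * v₆)) * ((-trace (v₂ * v₃)) * (-trace (v₄ * v₅)) - (-trace (v₂ * v₅)) * (-trace (v₃ * v₄)))
      + (-trace (v₃ * v₆)) * ((-trace (v₂ * v₅)) * (-trace (v₁ * v₄)) - (-trace (v₁ * v₂)) * (-trace (v₄ * v₅)))
      + (-trace (v₄ * v₆)) * ((-trace (v₁ * v₂)) * (-trace (v₃ * v₅)) - (-trace (v₂ * v₃)) * (-trace (v₁ * v₅))) := by
  rw [Matrix.trace_fin_two] at h₁ h₂ h₃ h₄ h₅ h₆
  have e₁ : v₁ 1 1 = - v₁ 0 0 := by linear_combination h₁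
  have e₂ : v₂ 1 1 = - v₂ 0 0 := by linear_combination h₂
  have e₃ : v₃ 1 1 = - v₃ 0 0 := by linear_combination h₃
  have e₄ : v₄ 1 1 = - v₄ 0 0 := by linear_combination h₄
  have e₅ : v₅ 1 1 = - v₅ 0 0 := by linear_combination h₅
  have e₆ : v₆ 1 1 = - v₆ 0 0 := by linear_combination h₆
  simp only [Matrix.trace_fin_two, Matrix.mul_apply, Fin.sum_univ_two, e₁, e₂, e₃, e₄, e₅, e₆]
  ring
end
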